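/- arXiv:2111.04527 — 3 statements merged into one kernel-verified Lean document; each statement's English description precedes it below -/
import Mathlib

section
/- Let (M,d) be a metric space, Y ⊆ M, A ⊆ X ⊆ M, s > 0, and suppose A is an s-approximation of X with a projection map Π : X → A satisfying d(x,Π(x)) ≤ s for all x ∈ X and Π(a) = a for all a ∈ A. Then for every α > 0 and every simplex σ ∈ 𝒞_Y(X,α): (a) the image Π(σ) = {Π(x) : x ∈ σ} is a simplex of 𝒞_Y(A,α+s); and (b) the union σ ∪ Π(σ) is a simplex of 𝒞_Y(X,α+s). In particular Π induces a simplicial map 𝒞_Y(X,α) → 𝒞_Y(A,α+s) whose composite with the inclusion 𝒞_Y(A,α+s) ↪ 𝒞_Y(X,α+s) is contiguous to the inclusion 𝒞_Y(X,α) ↪ 𝒞_Y(X,α+s). -/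
/-- The (generalized) Čech complex `𝒞_Y(X, α)`: its simplices are the finite
subsets `σ ⊆ X` such that there exists `y ∈ Y` with `d(x, y) < α` for all `x ∈ σ`. -/
def cechComplex {M : Type*} [MetricSpace M] (Y X : Set M) (α : ℝ) : Set (Finset M) :=
  {σ | ↑σ ⊆ X ∧ ∃ y ∈ Y, ∀ x ∈ σ, dist x y < α}

theorem cech_projection_simplicial_and_contiguous {M : Type*} [MetricSpace M] [DecidableEq M]
    (Y A X : Set M) (hAX : A ⊆ X) (s : ℝ) (hs : 0 < s)
    (proj : M → M) (hmem : ∀ x ∈ X, proj x ∈ A)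
    (hdist : ∀ x ∈ X, dist x (proj x) ≤ s) (hfix : ∀ a ∈ A, proj a = a) :
    ∀ α > (0 : ℝ), ∀ σ ∈ cechComplex Y X α,
      σ.image proj ∈ cechComplex Y A (α + s) ∧
      σ ∪ σ.image proj ∈ cechComplex Y X (α + s) := by
  intro α hα σ hσ
  obtain ⟨hσX, y, hyY, hy⟩ := hσ
  have key : ∀ x ∈ σ, dist (proj x) y < α + s := by
    intro x hx
    have hxX : x ∈ X := hσX hx
    calc dist (proj x) y ≤ dist (proj x) x + dist x y := dist_triangle _ _ _
      _ = dist x (proj x) + dist x y := by rw [dist_comm]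
      _ < s + α := add_lt_add_of_le_of_lt (hdist x hxX) (hy x hx)
      _ = α + s := add_comm _ _
  constructor
  · refine ⟨?_, y, hyY, ?_⟩
    · intro a ha
      simp only [Finset.coe_image, Set.mem_image, Finset.mem_coe] at ha
      obtain ⟨x, hx, rfl⟩ := ha
      exact hmem x (hσX hx)
    · intro a ha
      obtain ⟨x, hx, rfl⟩ := Finset.mem_image.mp ha
      exact key x hx
  · refine ⟨?_, y, hyY, ?_⟩
    · intro x hx
      rcases Finset.mem_union.mp hx with h | h
      · exact hσX h
      · obtain ⟨z, hz, rfl⟩ := Finset.mem_image.mp h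
        exact hAX (hmem z (hσX hz))
    · intro x hx
      rcases Finset.mem_union.mp hx with h | h
      · exact lt_of_lt_of_le (hy x h) (le_add_of_nonneg_right hs.le)
      · obtain ⟨z, hz, rfl⟩ := Finset.mem_image.mp h
        exact key z hz
end

section
/- Let (M,d) be a metric space, Y ⊆ M, A ⊆ X ⊆ M, and let ε > d⃗_H(X,A) = sup_{x∈X} inf_{a∈A} d(x,a). Then there exists a map Π : X → A with d(x,Π(x)) < ε for all x ∈ X and Π(a) = a for all a ∈ A, such that for every α > 0 and every simplex σ ∈ 𝒞_Y(X,α): (a) Π(σ) is a simplex of 𝒞_Y(A,α+ε); and (b) σ ∪ Π(σ) is a simplex of 𝒞_Y(X,α+ε). -/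
/-- The directed Hausdorff distance from `X` to `A`:
`d⃗_H(X,A) = sup_{x ∈ X} inf_{a ∈ A} d(x,a)`, in the extended nonnegative reals. -/
noncomputable def directedHausdorffDist {M : Type*} [MetricSpace M] (X A : Set M) : ENNReal :=
  ⨆ x ∈ X, EMetric.infEdist x A

theorem cech_projection_of_directedHausdorff {M : Type*} [MetricSpace M] [DecidableEq M]
    (Y A X : Set M) (hAX : A ⊆ X) (ε : ℝ)
    (h : directedHausdorffDist X A < ENNReal.ofReal ε) :
    ∃ proj : M → M, (∀ x ∈ X, proj x ∈ A) ∧ (∀ x ∈ X, dist x (proj x) < ε) ∧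
      (∀ a ∈ A, proj a = a) ∧
      ∀ α > (0 : ℝ), ∀ σ ∈ cechComplex Y X α,
        σ.image proj ∈ cechComplex Y A (α + ε) ∧
        σ ∪ σ.image proj ∈ cechComplex Y X (α + ε) := by
  classical
  have key : ∀ x ∈ X, ∃ a ∈ A, dist x a < ε := by
    intro x hx
    have h1 : EMetric.infEdist x A < ENNReal.ofReal ε := by
      refine lt_of_le_of_lt ?_ h
      exact le_iSup₂ (f := fun x (_ : x ∈ X) => EMetric.infEdist x A) x hx
    obtain ⟨a, haA, ha⟩ := EMetric.infEdist_lt_iff.mp h1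
    exact ⟨a, haA, by rwa [edist_lt_ofReal] at ha⟩
  set proj : M → M := fun x =>
    if hx : x ∈ A then x
    else if hx' : x ∈ X then (key x hx').choose else x with hproj
  have hmemA : ∀ x ∈ X, proj x ∈ A := by
    intro x hx
    simp only [hproj]
    split
    · assumption
    · exact (key x hx).choose_spec.1
  have hdist : ∀ x ∈ X, dist x (proj x) < ε := by
    intro x hx
    have hε : 0 < ε := by
      obtain ⟨a, _, ha⟩ := key x hx
      exact lt_of_le_of_lt dist_nonneg ha
    simp only [hproj]
    split
    · simpa
    · exact (key x hx).choose_spec.2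
  have hfix : ∀ a ∈ A, proj a = a := fun a ha => by simp [hproj, ha]
  refine ⟨proj, hmemA, hdist, hfix, ?_⟩
  intro α hα σ hσ
  obtain ⟨hσX, y, hyY, hy⟩ := hσ
  constructor
  · refine ⟨?_, y, hyY, ?_⟩
    · intro z hz
      simp only [Finset.coe_image, Set.mem_image] at hz
      obtain ⟨x, hx, rfl⟩ := hz
      exact hmemA x (hσX hx)
    · intro z hz
      obtain ⟨x, hx, rfl⟩ := Finset.mem_image.mp hz
      calc dist (proj x) y ≤ dist (proj x) x + dist x y := dist_triangle _ _ _
        _ < ε + α := by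
            have := hdist x (hσX hx)
            rw [dist_comm] at this
            exact add_lt_add this (hy x hx)
        _ = α + ε := by ring
  · refine ⟨?_, y, hyY, ?_⟩
    · intro z hz
      simp only [Finset.coe_union, Set.mem_union, Finset.coe_image, Set.mem_image,
        Finset.mem_coe] at hz
      rcases hz with hz | ⟨x, hx, rfl⟩
      · exact hσX hz
      · exact hAX (hmemA x (hσX hx))
    · intro z hz
      rcases Finset.mem_union.mp hz with hz | hz
      · exact lt_of_lt_of_le (hy z hz) (by linarith [(lt_of_le_of_lt dist_nonneg (hdist z (hσX hz)))])
      · obtain ⟨x, hx, rfl⟩ := Finset.mem_image.mp hz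
        calc dist (proj x) y ≤ dist (proj x) x + dist x y := dist_triangle _ _ _
          _ < ε + α := by
              have := hdist x (hσX hx)
              rw [dist_comm] at this
              exact add_lt_add this (hy x hx)
          _ = α + ε := by ring
end

section
/- Let q ≥ 1 be an integer, let A_q = {ξ^1, …, ξ^q} ⊆ ℂ be the set of q-th roots of unity where ξ^k = exp(2πik/q), and let α > 0. Then a finite subset σ ⊆ A_q is a simplex of the intrinsic Čech complex 𝒞_{A_q}(A_q, α) if and only if there exist i ∈ ℤ and a natural number j with j ≤ q/2 such that 2 sin(jπ/q) < α and σ ⊆ {ξ^{i−j}, ξ^{i−j+1}, …, ξ^{i−1}, ξ^i, ξ^{i+1}, …, ξ^{i+j}}. -/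
/-- `rootOfUnity q k = ξ^k = exp(2πik/q)`, the `k`-th power of the primitive
`q`-th root of unity. -/
noncomputable def rootOfUnity (q : ℕ) (k : ℤ) : ℂ :=
  Complex.exp (2 * (Real.pi : ℂ) * Complex.I * (k : ℂ) / (q : ℂ))

open Real Complex

lemma root_eq (q : ℕ) (hq : q ≠ 0) (k : ℤ) :
    rootOfUnity q k = Complex.exp (((2 * π * k / q : ℝ) : ℂ) * Complex.I) := by
  have hq' : (q : ℂ) ≠ 0 := Nat.cast_ne_zero.mpr hq
  unfold rootOfUnity
  congr 1
  push_cast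
  ring

lemma root_pow (q : ℕ) (hq : q ≠ 0) (k : ℤ) : rootOfUnity q k ^ q = 1 := by
  rw [root_eq q hq, ← Complex.exp_nat_mul]
  have hq' : (q : ℂ) ≠ 0 := Nat.cast_ne_zero.mpr hq
  have : (q : ℂ) * (((2 * π * k / q : ℝ) : ℂ) * Complex.I) = (k : ℂ) * (2 * π * Complex.I) := by
    push_cast
    field_simp
  rw [this, Complex.exp_int_mul_two_pi_mul_I]

lemma root_surj (q : ℕ) (hq : q ≠ 0) {z : ℂ} (hz : z ^ q = 1) :
    ∃ m : ℤ, z = rootOfUnity q m := by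
  haveI : NeZero q := ⟨hq⟩
  obtain ⟨i, _, rfl⟩ := (Complex.isPrimitiveRoot_exp q hq).eq_pow_of_pow_eq_one hz
  refine ⟨i, ?_⟩
  rw [← Complex.exp_nat_mul]
  unfold rootOfUnity
  congr 1
  push_cast
  ring

lemma abs_exp_sub_one (θ : ℝ) :
    ‖Complex.exp ((θ : ℂ) * Complex.I) - 1‖ = 2 * |Real.sin (θ / 2)| := by
  rw [Complex.exp_mul_I]
  have h1 : ‖Complex.cos θ + Complex.sin θ * Complex.I - 1‖
      = Real.sqrt ((Real.cos θ - 1) ^ 2 + (Real.sin θ) ^ 2) := by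
    rw [Complex.norm_def, Complex.normSq_apply]
    push_cast
    simp [Complex.add_re, Complex.add_im, Complex.cos_ofReal_re, Complex.sin_ofReal_re,
      Complex.cos_ofReal_im, Complex.sin_ofReal_im]
    ring_nf
  rw [h1]
  have h2 : (Real.cos θ - 1) ^ 2 + (Real.sin θ) ^ 2 = (2 * |Real.sin (θ / 2)|) ^ 2 := by
    have hc : Real.cos θ = 1 - 2 * Real.sin (θ / 2) ^ 2 := by
      have h := Real.cos_two_mul' (θ / 2)
      have h2 := Real.sin_sq_add_cos_sq (θ / 2)
      rw [show 2 * (θ / 2) = θ from by ring] at h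
      nlinarith
    have hs : Real.sin θ = 2 * Real.sin (θ / 2) * Real.cos (θ / 2) := by
      rw [← Real.sin_two_mul]; ring_nf
    have habs : (2 * |Real.sin (θ / 2)|) ^ 2 = 4 * Real.sin (θ / 2) ^ 2 := by
      rw [mul_pow, _root_.sq_abs]; ring
    rw [hc, hs, habs]
    nlinarith [Real.sin_sq_add_cos_sq (θ / 2)]
  rw [h2, Real.sqrt_sq (by positivity)]

lemma dist_root (q : ℕ) (hq : q ≠ 0) (a b : ℤ) :
    dist (rootOfUnity q a) (rootOfUnity q b) = 2 * |Real.sin (π * (a - b) / q)| := by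
  rw [Complex.dist_eq, root_eq q hq, root_eq q hq]
  have key : Complex.exp (((2 * π * a / q : ℝ) : ℂ) * Complex.I)
      - Complex.exp (((2 * π * b / q : ℝ) : ℂ) * Complex.I)
      = Complex.exp (((2 * π * b / q : ℝ) : ℂ) * Complex.I)
        * (Complex.exp (((2 * π * (a - b) / q : ℝ) : ℂ) * Complex.I) - 1) := by
    rw [mul_sub, mul_one, ← Complex.exp_add]
    congr 2
    push_cast
    field_simp
    ring
  rw [key, norm_mul, abs_exp_sub_one]
  have h0 : ‖Complex.exp (((2 * π * b / q : ℝ) : ℂ) * Complex.I)‖ = 1 := by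
    rw [Complex.norm_exp]
    simp
  rw [h0, one_mul]
  congr 2
  push_cast
  ring

lemma root_add_mul (q : ℕ) (hq : q ≠ 0) (a t : ℤ) :
    rootOfUnity q (a + t * q) = rootOfUnity q a := by
  have hq' : (q : ℂ) ≠ 0 := Nat.cast_ne_zero.mpr hq
  rw [root_eq q hq, root_eq q hq, ← mul_one (Complex.exp (((2 * π * a / q : ℝ) : ℂ) * Complex.I)),
    ← Complex.exp_int_mul_two_pi_mul_I t, ← Complex.exp_add]
  congr 1
  push_cast
  field_simp

lemma abs_sin_eq (q : ℕ) (hq : q ≠ 0) (r : ℤ) (h : (r.natAbs : ℝ) ≤ q / 2) :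
    |Real.sin (π * r / q)| = Real.sin (r.natAbs * π / q) := by
  have hqR : (0 : ℝ) < q := by positivity
  set s : ℝ := (r.natAbs : ℝ) with hs
  have hs0 : 0 ≤ s := by positivity
  have harg1 : 0 ≤ s * π / q := by positivity
  have harg2 : s * π / q ≤ π := by
    rw [div_le_iff₀ hqR]
    have h1 : (1 : ℝ) ≤ q := by exact_mod_cast Nat.one_le_iff_ne_zero.mpr hq
    nlinarith [Real.pi_pos]
  have hnonneg : 0 ≤ Real.sin (s * π / q) := Real.sin_nonneg_of_nonneg_of_le_pi harg1 harg2
  rcases le_or_gt 0 r with hr | hr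
  · have : (r : ℝ) = s := by
      rw [hs, Nat.cast_natAbs]
      push_cast
      exact (abs_of_nonneg (by exact_mod_cast hr)).symm
    rw [this, show π * s / q = s * π / q from by ring, _root_.abs_of_nonneg hnonneg]
  · have : (r : ℝ) = -s := by
      rw [hs]
      push_cast [Nat.cast_natAbs]
      rw [abs_of_neg (by exact_mod_cast hr)]
      ring
    rw [this, show π * -s / q = -(s * π / q) from by ring, Real.sin_neg, abs_neg,
      _root_.abs_of_nonneg hnonneg]

theorem intrinsic_cech_roots_of_unity (q : ℕ) (hq : 1 ≤ q) (α : ℝ) (hα : 0 < α)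
    (σ : Finset ℂ) (hσ : ↑σ ⊆ {z : ℂ | z ^ q = 1}) :
    σ ∈ cechComplex {z : ℂ | z ^ q = 1} {z : ℂ | z ^ q = 1} α ↔
      ∃ (i : ℤ) (j : ℕ), (j : ℝ) ≤ q / 2 ∧ 2 * Real.sin (j * Real.pi / q) < α ∧
        ∀ x ∈ σ, ∃ k : ℤ, |k| ≤ (j : ℤ) ∧ x = rootOfUnity q (i + k) := by
  classical
  have hq0 : q ≠ 0 := by omega
  have hqR : (0 : ℝ) < q := by positivity
  set P : ℕ → Prop := fun j => 2 * Real.sin (j * π / q) < α with hP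
  constructor
  · rintro ⟨-, y, hy, hdist⟩
    obtain ⟨m, rfl⟩ := root_surj q hq0 hy
    -- choose representatives
    have key : ∀ x ∈ σ, ∃ r : ℤ, 2 * r.natAbs ≤ q ∧ x = rootOfUnity q (m + r) := by
      intro x hx
      obtain ⟨k, rfl⟩ := root_surj q hq0 (hσ hx)
      set n : ℤ := (k - m) % q with hn
      have hn0 : 0 ≤ n := Int.emod_nonneg _ (by exact_mod_cast hq0)
      have hnq : n < q := Int.emod_lt_of_pos _ (by exact_mod_cast Nat.pos_of_ne_zero hq0)
      have hdecomp : rootOfUnity q k = rootOfUnity q (m + n) := by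
        have h1 : k = (m + n) + ((k - m) / q) * q := by
          have h := Int.emod_add_mul_ediv (k - m) q
          rw [mul_comm] at h
          omega
        rw [h1, root_add_mul q hq0]
      refine ⟨if 2 * n ≤ q then n else n - q, ?_, ?_⟩
      · split_ifs with h
        · omega
        · omega
      · split_ifs with h
        · exact hdecomp
        · rw [show m + (n - q) = (m + n) + (-1) * q from by ring, root_add_mul q hq0]
          exact hdecomp
    set j : ℕ := Nat.findGreatest P (q / 2) with hj
    have hP0 : P 0 := by simp [hP, hα]
    have hjle : j ≤ q / 2 := Nat.findGreatest_le _
    have hPj : P j := Nat.findGreatest_spec (Nat.zero_le _) hP0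
    refine ⟨m, j, ?_, hPj, ?_⟩
    · calc (j : ℝ) ≤ ((q / 2 : ℕ) : ℝ) := by exact_mod_cast hjle
        _ ≤ (q : ℝ) / 2 := Nat.cast_div_le
    · intro x hx
      obtain ⟨r, hr2, hxr⟩ := key x hx
      have hrhalf : (r.natAbs : ℝ) ≤ (q : ℝ) / 2 := by
        rw [le_div_iff₀ (by norm_num : (0:ℝ) < 2)]
        exact_mod_cast by omega
      have hdistx : dist x (rootOfUnity q m) = 2 * Real.sin (r.natAbs * π / q) := by
        rw [hxr, dist_root q hq0, show ((m + r : ℤ) : ℝ) - (m : ℤ) = (r : ℝ) from by push_cast; ring,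
          abs_sin_eq q hq0 r hrhalf]
      have hPr : P r.natAbs := by
        show 2 * Real.sin ((r.natAbs : ℝ) * π / q) < α
        rw [← hdistx]
        exact hdist x hx
      have hrle : r.natAbs ≤ j :=
        Nat.le_findGreatest (by rw [Nat.le_div_iff_mul_le (by norm_num)]; omega) hPr
      refine ⟨r, ?_, hxr⟩
      rw [Int.abs_eq_natAbs]
      exact_mod_cast hrle
  · rintro ⟨i, j, hj2, hjα, hcov⟩
    refine ⟨hσ, rootOfUnity q i, root_pow q hq0 i, ?_⟩
    intro x hx
    obtain ⟨k, hk, rfl⟩ := hcov x hx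
    have hkhalf : (k.natAbs : ℝ) ≤ (q : ℝ) / 2 := by
      calc (k.natAbs : ℝ) ≤ (j : ℝ) := by
            exact_mod_cast (Int.abs_eq_natAbs k ▸ hk)
        _ ≤ (q : ℝ) / 2 := hj2
    rw [dist_root q hq0, show ((i + k : ℤ) : ℝ) - (i : ℤ) = (k : ℝ) from by push_cast; ring,
      abs_sin_eq q hq0 k hkhalf]
    have hmono : Real.sin (k.natAbs * π / q) ≤ Real.sin (j * π / q) := by
      have h1 : (k.natAbs : ℝ) * π / q ≤ (j : ℝ) * π / q := by
        gcongr
        exact_mod_cast (Int.abs_eq_natAbs k ▸ hk)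
      have h2 : (j : ℝ) * π / q ≤ π / 2 := by
        rw [div_le_iff₀ hqR] at *
        nlinarith [Real.pi_pos]
      have h3 : (0:ℝ) ≤ (k.natAbs : ℝ) * π / q := by positivity
      exact Real.strictMonoOn_sin.monotoneOn
        ⟨by linarith [Real.pi_pos, h3], by linarith⟩
        ⟨by nlinarith [Real.pi_pos], by linarith⟩ h1
    linarith
end
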